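/- arXiv:1608.06793 — 2 statements merged into one kernel-verified Lean document; each statement's English description precedes it below -/
import Mathlib

section
/- Let L be a finite-dimensional solvable Lie algebra over a field of characteristic p > 2 such that the Frattini subalgebra φ(L) is invariant under all derivations of L. Then the nilradical N(L) is invariant under all derivations of L. -/
/-- The canonical quotient map `L → L ⧸ I` as a morphism of Lie algebras. -/
def lieQuotMk {F L : Type*} [Field F] [LieRing L] [LieAlgebra F L] (I : LieIdeal F L) :
    L →ₗ⁅F⁆ L ⧸ I where
  toLinearMap := (LieSubmodule.Quotient.mk' I).toLinearMap
  map_lie' := rfl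

variable (F : Type*) [Field F]

/-- The nilradical: the largest nilpotent ideal of a (finite-dimensional) Lie algebra. -/
noncomputable def nilrad (L : Type*) [LieRing L] [LieAlgebra F L] : LieIdeal F L :=
  sSup {I : LieIdeal F L | LieRing.IsNilpotent I}

/-- The upper nilpotent series: `N 0 = 0`, `N (i+1) / N i = nilradical of L ⧸ N i`. -/
noncomputable def upperNil (L : Type*) [LieRing L] [LieAlgebra F L] : ℕ → LieIdeal F L
  | 0 => ⊥
  | n + 1 => LieIdeal.comap (lieQuotMk (upperNil L n)) (nilrad F (L ⧸ upperNil L n))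

/-- The nilpotent length: the least `n` with `N n = L`. -/
noncomputable def nilLen (L : Type*) [LieRing L] [LieAlgebra F L] : ℕ :=
  sInf {n : ℕ | upperNil F L n = ⊤}

/-- The nilpotent residual `γ∞(L)`: the smallest ideal with nilpotent quotient. -/
noncomputable def nilResidual (L : Type*) [LieRing L] [LieAlgebra F L] : LieIdeal F L :=
  sInf {I : LieIdeal F L | LieRing.IsNilpotent (L ⧸ I)}

/-- The lower nilpotent series: `Γ 0 = L`, `Γ (i+1) = γ∞(Γ i)`, viewed as subalgebras of `L`. -/
noncomputable def lowerNil (L : Type*) [LieRing L] [LieAlgebra F L] : ℕ → LieSubalgebra F L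
  | 0 => ⊤
  | n + 1 =>
      LieSubalgebra.map (lowerNil L n).incl
        (nilResidual F (lowerNil L n)).toLieSubalgebra

/-- `M` is a maximal (proper) subalgebra of `L`. -/
def IsMaxSub {L : Type*} [LieRing L] [LieAlgebra F L] (M : LieSubalgebra F L) : Prop :=
  M ≠ ⊤ ∧ ∀ K : LieSubalgebra F L, M < K → K = ⊤

/-- The Frattini subalgebra: the intersection of all maximal subalgebras. -/
noncomputable def lieFrattini (L : Type*) [LieRing L] [LieAlgebra F L] : LieSubalgebra F L :=
  sInf {M : LieSubalgebra F L | IsMaxSub F M}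

/-- The core of a subalgebra `U`: the largest ideal of `L` contained in `U`. -/
noncomputable def lieCore {L : Type*} [LieRing L] [LieAlgebra F L] (U : LieSubalgebra F L) :
    LieIdeal F L :=
  sSup {I : LieIdeal F L | (I : Set L) ⊆ (U : Set L)}

/-- `A` is a minimal ideal of `L`. -/
def IsMinIdeal {L : Type*} [LieRing L] [LieAlgebra F L] (A : LieIdeal F L) : Prop :=
  A ≠ ⊥ ∧ ∀ B : LieIdeal F L, B < A → B = ⊥

/-- The Frattini series: `φ i (L) / N (i-1) (L) = φ(L ⧸ N (i-1) (L))` for `i ≥ 1`. -/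
noncomputable def fratSeries (L : Type*) [LieRing L] [LieAlgebra F L] (i : ℕ) :
    LieSubalgebra F L :=
  LieSubalgebra.comap (lieQuotMk (upperNil F L (i - 1)))
    (lieFrattini F (L ⧸ upperNil F L (i - 1)))

/-- `L` is extreme: `N i (L) / φ i (L)` is a chief factor of `L` for each `1 ≤ i ≤ n(L)`. -/
def IsExtremeLie (L : Type*) [LieRing L] [LieAlgebra F L] : Prop :=
  ∀ i, 1 ≤ i → i ≤ nilLen F L →
    (fratSeries F L i : Set L) ⊆ (upperNil F L i : Set L) ∧
    (fratSeries F L i : Set L) ≠ (upperNil F L i : Set L) ∧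
    ∀ C : LieIdeal F L, (fratSeries F L i : Set L) ⊆ (C : Set L) → C ≤ upperNil F L i →
      (C : Set L) = (fratSeries F L i : Set L) ∨ C = upperNil F L i

/-- `L` is supersolvable: it has a chain of ideals with one-dimensional quotients. -/
def IsSupersolvable (L : Type*) [LieRing L] [LieAlgebra F L] : Prop :=
  ∃ (n : ℕ) (C : ℕ → LieIdeal F L), C 0 = ⊥ ∧ C n = ⊤ ∧
    ∀ i < n, C i ≤ C (i + 1) ∧
      Module.finrank F (C (i + 1)) = Module.finrank F (C i) + 1

/-- A minimal ideal `A` is complemented if some maximal subalgebra `M` satisfies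
`L = A + M` and `A ∩ M = 0`. -/
def IsComplementedIdeal {L : Type*} [LieRing L] [LieAlgebra F L] (A : LieIdeal F L) : Prop :=
  ∃ M : LieSubalgebra F L, IsMaxSub F M ∧
    A.toSubmodule ⊔ M.toSubmodule = ⊤ ∧ A.toSubmodule ⊓ M.toSubmodule = ⊥

/-!
`φ(L)` is stable under inner derivations, hence an ideal, and for a nilpotent ideal `I` every
maximal subalgebra contains `⁅I, I⁆` (Nakayama). So the image `A` of `I` in `L ⧸ φ(L)` is an
abelian ideal, on which `D` induces a derivation. For `a, b, c ∈ A` one has `⁅D a, b⁆ = ⁅D b, a⁆`,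
and then `⁅D a, ⁅D b, c⁆⁆ = 0` as soon as `2` is invertible; this makes `(ad x)^5 = 0` for `x` in
the ideal `A + D(A)`. Its preimage `J ⊇ I + D(I)` thus satisfies `(ad x)^5 L ⊆ φ(L)` for `x ∈ J`.
As `φ(L)` is non-generating, the Fitting decomposition of `ad x` forces `ad x` to be nilpotent,
so `J` is nilpotent by Engel's theorem and `D(I) ⊆ J ⊆ N(L)`.
-/

section LieAlgebra

variable {R L : Type*} [CommRing R] [LieRing L] [LieAlgebra R L]

theorem LieSubalgebra.toSubmodule_sup_lieIdeal (M : LieSubalgebra R L) (I : LieIdeal R L) :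
    (M ⊔ I.toLieSubalgebra).toSubmodule = M.toSubmodule ⊔ I.toSubmodule := by
  let S : LieSubalgebra R L :=
    { M.toSubmodule ⊔ I.toSubmodule with
      lie_mem' := fun {x y} hx hy => by
        obtain ⟨m, hm, i, hi, rfl⟩ := Submodule.mem_sup.mp hx
        obtain ⟨m', hm', i', hi', rfl⟩ := Submodule.mem_sup.mp hy
        rw [add_lie, lie_add, ← lie_skew i]
        exact add_mem (add_mem (Submodule.mem_sup_left (M.lie_mem hm hm'))
          (Submodule.mem_sup_right (I.lie_mem hi')))
          (Submodule.mem_sup_right (neg_mem (I.lie_mem hi))) }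
  refine le_antisymm (?_ : M ⊔ I.toLieSubalgebra ≤ S) ?_
  · exact sup_le (fun x hx => Submodule.mem_sup_left hx) (fun x hx => Submodule.mem_sup_right hx)
  · exact sup_le (le_sup_left : M ≤ M ⊔ I.toLieSubalgebra)
      (le_sup_right : I.toLieSubalgebra ≤ M ⊔ I.toLieSubalgebra)

open LieModule in
/-- Nakayama's lemma for nilpotent Lie algebras. -/
theorem LieSubalgebra.eq_top_of_sup_lowerCentralSeries_one_eq_top [LieRing.IsNilpotent L]
    (H : LieSubalgebra R L)
    (h : H.toSubmodule ⊔ (lowerCentralSeries R L L 1).toSubmodule = ⊤) : H = ⊤ := by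
  have hlcs : ∀ k x, ∀ u ∈ lowerCentralSeries R L L k,
      ⁅x, u⁆ ∈ lowerCentralSeries R L L (k + 1) := fun k x u hu => by
    rw [lowerCentralSeries_succ]
    exact LieSubmodule.lie_mem_lie (LieSubmodule.mem_top x) hu
  have key : ∀ k, H.toSubmodule ⊔ (lowerCentralSeries R L L k).toSubmodule = ⊤ := by
    intro k
    induction k with
    | zero => simp
    | succ k ih =>
      have hle : (lowerCentralSeries R L L 1).toSubmodule ≤
          H.toSubmodule ⊔ (lowerCentralSeries R L L (k + 1)).toSubmodule := by
        rw [lowerCentralSeries_succ, lowerCentralSeries_zero,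
          LieSubmodule.lieIdeal_oper_eq_linear_span', Submodule.span_le]
        rintro _ ⟨x, -, y, -, rfl⟩
        obtain ⟨a, ha, w, hw, rfl⟩ := Submodule.mem_sup.mp (ih ▸ Submodule.mem_top : x ∈ _)
        obtain ⟨b, hb, v, hv, rfl⟩ := Submodule.mem_sup.mp (ih ▸ Submodule.mem_top : y ∈ _)
        rw [add_lie, lie_add, ← lie_skew w]
        exact add_mem (add_mem (Submodule.mem_sup_left (H.lie_mem ha hb))
          (Submodule.mem_sup_right (hlcs k a v hv)))
          (Submodule.mem_sup_right (neg_mem (hlcs k _ w hw)))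
      refine top_le_iff.mp ?_
      calc ⊤ = H.toSubmodule ⊔ (lowerCentralSeries R L L 1).toSubmodule := h.symm
        _ ≤ H.toSubmodule ⊔ (H.toSubmodule ⊔ (lowerCentralSeries R L L (k + 1)).toSubmodule) :=
          sup_le_sup_left hle _
        _ = H.toSubmodule ⊔ (lowerCentralSeries R L L (k + 1)).toSubmodule := by
          rw [← sup_assoc, sup_idem]
  obtain ⟨k, hk⟩ := (isNilpotent_iff R L L).mp ‹_›
  simpa [hk, ← LieSubalgebra.toSubmodule_eq_top] using key k

theorem LieHom.map_ad_pow_apply {L' : Type*} [LieRing L'] [LieAlgebra R L'] (f : L →ₗ⁅R⁆ L')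
    (x y : L) (n : ℕ) :
    f ((LieAlgebra.ad R L x ^ n) y) = (LieAlgebra.ad R L' (f x) ^ n) (f y) := by
  induction n with
  | zero => rfl
  | succ n ih => rw [pow_succ', pow_succ', Module.End.mul_apply, Module.End.mul_apply, ← ih,
      LieAlgebra.ad_apply, LieAlgebra.ad_apply, LieHom.map_lie]

def LieDerivation.mapQ (D : LieDerivation R L L) (I : LieIdeal R L) (h : ∀ x ∈ I, D x ∈ I) :
    LieDerivation R (L ⧸ I) (L ⧸ I) where
  toLinearMap := Submodule.mapQ I.toSubmodule I.toSubmodule D.toLinearMap h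
  leibniz' := by
    rintro ⟨x⟩ ⟨y⟩
    exact congrArg (LieSubmodule.Quotient.mk' I) (D.apply_lie_eq_sub x y)

def LieIdeal.supMapDerivation (A : LieIdeal R L) (D : LieDerivation R L L) : LieIdeal R L where
  toSubmodule := A.toSubmodule ⊔ A.toSubmodule.map D.toLinearMap
  lie_mem := fun {z w} hw => by
    obtain ⟨i, hi, _, ⟨a, ha, rfl⟩, rfl⟩ := Submodule.mem_sup.mp hw
    have hDa : ⁅z, D a⁆ = D ⁅z, a⁆ - ⁅D z, a⁆ := by rw [D.apply_lie_eq_add]; abel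
    rw [lie_add]
    refine add_mem (Submodule.mem_sup_left (A.lie_mem hi)) ?_
    rw [LieDerivation.coeFn_coe, hDa]
    exact sub_mem (Submodule.mem_sup_right (Submodule.mem_map_of_mem (A.lie_mem ha)))
      (Submodule.mem_sup_left (A.lie_mem ha))

namespace LieDerivation

variable (D : LieDerivation R L L) {A : LieIdeal R L}

theorem lie_mem_supMapDerivation_of_forall {S : Submodule R L} {x y : L}
    (hx : x ∈ A.supMapDerivation D) (h₁ : ∀ i ∈ A, ⁅i, y⁆ ∈ S) (h₂ : ∀ a ∈ A, ⁅D a, y⁆ ∈ S) :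
    ⁅x, y⁆ ∈ S := by
  obtain ⟨i, hi, _, ⟨a, ha, rfl⟩, rfl⟩ := Submodule.mem_sup.mp hx
  rw [add_lie]
  exact add_mem (h₁ i hi) (h₂ a ha)

theorem lie_apply_apply_eq (a b : L) : ⁅D a, D b⁆ = D ⁅a, D b⁆ - ⁅a, D (D b)⁆ := by
  rw [D.apply_lie_eq_add]; abel

variable (A) in
def bracketSpan : Submodule R L := Submodule.span R {z | ∃ a ∈ A, ∃ b ∈ A, ⁅D a, b⁆ = z}

theorem bracketSpan_le : D.bracketSpan A ≤ A.toSubmodule :=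
  Submodule.span_le.mpr <| by
    rintro _ ⟨a, -, b, hb, rfl⟩
    exact A.lie_mem hb

variable (hA : ∀ a ∈ A, ∀ b ∈ A, ⁅a, b⁆ = 0)
include hA

theorem lie_apply_comm {a b : L} (ha : a ∈ A) (hb : b ∈ A) : ⁅D a, b⁆ = ⁅D b, a⁆ := by
  have h := D.apply_lie_eq_add a b
  rw [hA a ha b hb, map_zero, ← lie_skew a] at h
  exact (sub_eq_zero.mp (by rw [sub_eq_add_neg, add_comm]; exact h.symm))

theorem lie_apply_lie_apply {a b c : L} (hb : b ∈ A) (hc : c ∈ A) :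
    ⁅D ⁅D a, b⁆, c⁆ = ⁅D a, ⁅D b, c⁆⁆ - ⁅D b, ⁅D a, c⁆⁆ := by
  rw [D.apply_lie_eq_add, add_lie, hA _ (A.lie_mem hb) c hc, add_zero, lie_lie]

-- `⁅D a, ⁅D b, c⁆⁆` is symmetric in `b, c` and, by `lie_apply_lie_apply`, vanishes for `b = c`.
theorem lie_apply_lie_apply_eq_zero (h2 : IsUnit (2 : R)) {a b c : L} (ha : a ∈ A) (hb : b ∈ A)
    (hc : c ∈ A) : ⁅D a, ⁅D b, c⁆⁆ = 0 := by
  have hsq : ∀ b ∈ A, ⁅D a, ⁅D b, b⁆⁆ = 0 := fun b hb => by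
    have h := D.lie_apply_lie_apply hA (a := b) ha hb
    rw [D.lie_apply_comm hA (A.lie_mem ha) hb, D.lie_apply_comm hA ha hb] at h
    exact sub_eq_self.mp h.symm
  have hpol := hsq (b + c) (add_mem hb hc)
  simp only [map_add, add_lie, lie_add, hsq b hb, hsq c hc, D.lie_apply_comm hA hc hb] at hpol
  rw [← h2.smul_eq_zero, two_smul]
  simpa using hpol

theorem lie_apply_eq_zero_of_mem_bracketSpan (h2 : IsUnit (2 : R)) {a q : L} (ha : a ∈ A)
    (hq : q ∈ D.bracketSpan A) : ⁅D a, q⁆ = 0 := by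
  have : D.bracketSpan A ≤ LinearMap.ker (LieAlgebra.ad R L (D a)) :=
    Submodule.span_le.mpr <| by
      rintro _ ⟨b, hb, c, hc, rfl⟩
      exact D.lie_apply_lie_apply_eq_zero hA h2 ha hb hc
  exact this hq

theorem apply_lie_eq_zero_of_mem_bracketSpan (h2 : IsUnit (2 : R)) {a q : L} (ha : a ∈ A)
    (hq : q ∈ D.bracketSpan A) : ⁅D q, a⁆ = 0 := by
  have : D.bracketSpan A ≤ LinearMap.ker (LieAlgebra.ad R L a ∘ₗ D.toLinearMap) :=
    Submodule.span_le.mpr <| by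
      rintro _ ⟨b, hb, c, hc, rfl⟩
      have h := D.lie_apply_lie_apply hA (a := b) hc ha
      rw [D.lie_apply_lie_apply_eq_zero hA h2 hb hc ha,
        D.lie_apply_lie_apply_eq_zero hA h2 hc hb ha, sub_zero] at h
      change ⁅a, D ⁅D b, c⁆⁆ = 0
      rw [← lie_skew, h, neg_zero]
  rw [← lie_skew, neg_eq_zero]
  exact this hq

theorem ad_pow_five_eq_zero (h2 : IsUnit (2 : R)) {x : L} (hx : x ∈ A.supMapDerivation D) :
    LieAlgebra.ad R L x ^ 5 = 0 := by
  set P := D.bracketSpan A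
  set B := A.toSubmodule ⊔ P.map D.toLinearMap
  have hPA : P ≤ A.toSubmodule := D.bracketSpan_le
  have hA' : ∀ i ∈ A, ∀ y, ⁅i, y⁆ ∈ A := fun i hi y => by
    rw [← lie_skew]; exact neg_mem (A.lie_mem hi)
  -- `ad x` maps `A + D(A)` into `B = A + D(P)`, `B` into `A`, `A` into `P` and `P` to `0`.
  have hxJ : ∀ y ∈ A.supMapDerivation D, ⁅x, y⁆ ∈ B := by
    intro y hy
    obtain ⟨i, hi, _, ⟨b, hb, rfl⟩, rfl⟩ := Submodule.mem_sup.mp hy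
    refine D.lie_mem_supMapDerivation_of_forall hx
      (fun j hj => Submodule.mem_sup_left (hA' j hj _)) fun a ha => ?_
    rw [LieDerivation.coeFn_coe, lie_add, lie_apply_apply_eq, ← lie_skew a, map_neg]
    refine add_mem (Submodule.mem_sup_left (A.lie_mem hi))
      (sub_mem ?_ (Submodule.mem_sup_left (hA' a ha _)))
    exact neg_mem (Submodule.mem_sup_right (Submodule.mem_map_of_mem
      (Submodule.subset_span ⟨b, hb, a, ha, rfl⟩)))
  have hxB : ∀ y ∈ B, ⁅x, y⁆ ∈ A := by
    intro y hy
    obtain ⟨i, hi, _, ⟨q, hq, rfl⟩, rfl⟩ := Submodule.mem_sup.mp hy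
    refine D.lie_mem_supMapDerivation_of_forall hx (fun j hj => hA' j hj _) fun a ha => ?_
    rw [LieDerivation.coeFn_coe, lie_add, lie_apply_apply_eq, ← lie_skew a,
      D.apply_lie_eq_zero_of_mem_bracketSpan hA h2 ha hq, neg_zero, map_zero, zero_sub]
    exact add_mem (A.lie_mem hi) (neg_mem (hA' a ha _))
  have hxA : ∀ y ∈ A, ⁅x, y⁆ ∈ P := fun y hy =>
    D.lie_mem_supMapDerivation_of_forall hx (fun i hi => (hA i hi y hy).symm ▸ zero_mem _)
      (fun a ha => Submodule.subset_span ⟨a, ha, y, hy, rfl⟩)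
  have hxP : ∀ y ∈ P, ⁅x, y⁆ ∈ (⊥ : Submodule R L) := fun y hy =>
    D.lie_mem_supMapDerivation_of_forall hx
      (fun i hi => (Submodule.mem_bot R).mpr (hA i hi y (hPA hy)))
      (fun a ha => (Submodule.mem_bot R).mpr (D.lie_apply_eq_zero_of_mem_bracketSpan hA h2 ha hy))
  ext y
  have hxy : ⁅x, y⁆ ∈ A.supMapDerivation D := by
    rw [← lie_skew]; exact neg_mem ((A.supMapDerivation D).lie_mem hx)
  simpa [pow_succ', Module.End.mul_apply] using hxP _ (hxA _ (hxB _ (hxJ _ hxy)))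

end LieDerivation

end LieAlgebra

section Frattini

variable {F} {L : Type*} [LieRing L] [LieAlgebra F L]

theorem lieFrattini_eq_radical : lieFrattini F L = Order.radical (LieSubalgebra F L) := by
  rw [lieFrattini, sInf_eq_iInf]; rfl

theorem eq_top_of_sup_lieFrattini_eq_top [FiniteDimensional F L] {H : LieSubalgebra F L}
    (h : H ⊔ lieFrattini F L = ⊤) : H = ⊤ :=
  Order.radical_nongenerating ((lieFrattini_eq_radical (F := F) (L := L)) ▸ h)

-- Either `⁅I, I⁆ ≤ M`, or `M + ⁅I, I⁆ = L`, whence `(M ∩ I) + ⁅I, I⁆ = I` and `I ≤ M` by Nakayama.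
theorem lie_mem_of_isMaxSub {I : LieIdeal F L} [LieRing.IsNilpotent I] {M : LieSubalgebra F L}
    (hM : IsMaxSub F M) {a b : L} (ha : a ∈ I) (hb : b ∈ I) : ⁅a, b⁆ ∈ M := by
  by_cases hW : (⁅I, I⁆ : LieIdeal F L).toLieSubalgebra ≤ M
  · exact hW (LieSubmodule.lie_mem_lie ha hb)
  have htop : M.toSubmodule ⊔ (⁅I, I⁆ : LieIdeal F L).toSubmodule = ⊤ := by
    rw [← LieSubalgebra.toSubmodule_sup_lieIdeal, LieSubalgebra.toSubmodule_eq_top]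
    exact hM.2 _ (left_lt_sup.mpr hW)
  have hIM : LieSubalgebra.comap I.incl M = ⊤ := by
    refine LieSubalgebra.eq_top_of_sup_lowerCentralSeries_one_eq_top _ (top_le_iff.mp ?_)
    rintro ⟨i, hi⟩ -
    obtain ⟨m, hm, w, hw, rfl⟩ := Submodule.mem_sup.mp (htop ▸ Submodule.mem_top : i ∈ _)
    have hwI : w ∈ I := LieSubmodule.lie_le_right I I hw
    have hmI : m ∈ I := by simpa using sub_mem hi hwI
    have hw' : (⟨w, hwI⟩ : I) ∈ LieModule.lowerCentralSeries F I I 1 := by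
      apply LieModule.derivedSeries_le_lowerCentralSeries F I 1
      rw [LieIdeal.derivedSeries_eq_derivedSeriesOfIdeal_comap]
      simpa using hw
    exact Submodule.mem_sup.mpr ⟨⟨m, hmI⟩, hm, ⟨w, hwI⟩, hw', rfl⟩
  have haM : (⟨a, ha⟩ : I) ∈ LieSubalgebra.comap I.incl M := hIM ▸ LieSubalgebra.mem_top _
  have hbM : (⟨b, hb⟩ : I) ∈ LieSubalgebra.comap I.incl M := hIM ▸ LieSubalgebra.mem_top _
  exact M.lie_mem haM hbM

theorem lie_mem_lieFrattini {I : LieIdeal F L} [LieRing.IsNilpotent I] {a b : L} (ha : a ∈ I)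
    (hb : b ∈ I) : ⁅a, b⁆ ∈ lieFrattini F L := by
  rw [← SetLike.mem_coe, lieFrattini, LieSubalgebra.coe_sInf]
  exact Set.mem_iInter₂.mpr fun _ hM => lie_mem_of_isMaxSub hM ha hb

open Filter in
theorem engel_eq_top_of_ad_pow_mem_lieFrattini [FiniteDimensional F L] {x : L} {n : ℕ}
    (h : ∀ y, (LieAlgebra.ad F L x ^ n) y ∈ lieFrattini F L) : LieSubalgebra.engel F x = ⊤ := by
  refine eq_top_of_sup_lieFrattini_eq_top (top_le_iff.mp ?_)
  set f := LieAlgebra.ad F L x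
  obtain ⟨k, hk⟩ := eventually_atTop.mp f.eventually_codisjoint_ker_pow_range_pow
  have hker : LinearMap.ker (f ^ (k + n)) ≤ (LieSubalgebra.engel F x).toSubmodule :=
    fun y hy => (LieSubalgebra.mem_engel_iff F x y).mpr ⟨_, hy⟩
  have hrange : LinearMap.range (f ^ (k + n)) ≤ (lieFrattini F L).toSubmodule := by
    rintro _ ⟨y, rfl⟩
    rw [add_comm, pow_add, Module.End.mul_apply]
    exact h _
  calc ⊤ = LinearMap.ker (f ^ (k + n)) ⊔ LinearMap.range (f ^ (k + n)) :=
        (codisjoint_iff.mp (hk _ le_self_add)).symm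
    _ ≤ (LieSubalgebra.engel F x).toSubmodule ⊔ (lieFrattini F L).toSubmodule :=
        sup_le_sup hker hrange
    _ ≤ _ := sup_le (le_sup_left : LieSubalgebra.engel F x ≤ _)
      (le_sup_right : lieFrattini F L ≤ _)

theorem isNilpotent_of_ad_pow_mem_lieFrattini [FiniteDimensional F L] (J : LieIdeal F L) {n : ℕ}
    (h : ∀ x ∈ J, ∀ y, (LieAlgebra.ad F L x ^ n) y ∈ lieFrattini F L) :
    LieRing.IsNilpotent J :=
  LieSubalgebra.isNilpotent_of_forall_le_engel J.toLieSubalgebra fun x hx => by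
    rw [engel_eq_top_of_ad_pow_mem_lieFrattini (h x hx)]
    exact le_top

end Frattini

theorem exists_lieIdeal_ad_pow_five_mem {F L : Type*} [Field F] [LieRing L] [LieAlgebra F L]
    (h2 : IsUnit (2 : F)) (D : LieDerivation F L L) (Φ I : LieIdeal F L)
    (hΦ : ∀ x ∈ Φ, D x ∈ Φ) (hI : ∀ a ∈ I, ∀ b ∈ I, ⁅a, b⁆ ∈ Φ) :
    ∃ J : LieIdeal F L, (∀ x ∈ I, D x ∈ J) ∧
      ∀ x ∈ J, ∀ y, (LieAlgebra.ad F L x ^ 5) y ∈ Φ := by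
  set π := lieQuotMk Φ
  set A := I.map π
  have hA : ∀ a ∈ A, ∀ b ∈ A, ⁅a, b⁆ = 0 := by
    intro _ ha _ hb
    obtain ⟨a, rfl⟩ := LieIdeal.mem_map_of_surjective (LieSubmodule.Quotient.surjective_mk' Φ) ha
    obtain ⟨b, rfl⟩ := LieIdeal.mem_map_of_surjective (LieSubmodule.Quotient.surjective_mk' Φ) hb
    rw [← LieHom.map_lie]
    exact (LieSubmodule.Quotient.mk_eq_zero' (N := Φ)).mpr (hI a a.2 b b.2)
  refine ⟨(A.supMapDerivation (D.mapQ Φ hΦ)).comap π, fun x hx => ?_, fun x hx y => ?_⟩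
  · exact Submodule.mem_sup_right (Submodule.mem_map_of_mem (LieIdeal.mem_map hx))
  · rw [← LieSubmodule.Quotient.mk_eq_zero' (N := Φ)]
    change π _ = 0
    rw [π.map_ad_pow_apply, (D.mapQ Φ hΦ).ad_pow_five_eq_zero hA h2 (LieIdeal.mem_comap.mp hx)]
    rfl

theorem stmt9_general {F L : Type*} [Field F] [LieRing L] [LieAlgebra F L]
    [FiniteDimensional F L] (p : ℕ) [CharP F p] (hp : 2 < p)
    (hphi : ∀ (D : LieDerivation F L L), ∀ x ∈ lieFrattini F L, D x ∈ lieFrattini F L) :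
    ∀ (D : LieDerivation F L L), ∀ x ∈ nilrad F L, D x ∈ nilrad F L := by
  intro D
  have h2 : IsUnit (2 : F) := by
    refine Ne.isUnit fun h => ?_
    have := Nat.le_of_dvd two_pos ((CharP.cast_eq_zero_iff F p 2).mp (mod_cast h))
    omega
  let Φ : LieIdeal F L :=
    { toSubmodule := (lieFrattini F L).toSubmodule
      lie_mem := fun {x _} hm => by simpa using hphi (LieDerivation.ad F L x) _ hm }
  have hnil : ∀ I : LieIdeal F L, LieRing.IsNilpotent I → ∀ x ∈ I, D x ∈ nilrad F L := by
    intro I hI x hx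
    obtain ⟨J, hIJ, hJ⟩ := exists_lieIdeal_ad_pow_five_mem h2 D Φ I (hphi D)
      (fun a ha b hb => lie_mem_lieFrattini ha hb)
    exact le_sSup (show J ∈ {I : LieIdeal F L | LieRing.IsNilpotent I} from
      isNilpotent_of_ad_pow_mem_lieFrattini J hJ) (hIJ x hx)
  have hle : (nilrad F L).toSubmodule ≤ (nilrad F L).toSubmodule.comap D.toLinearMap :=
    (LieSubmodule.sSup_toSubmodule_eq_iSup _).trans_le (iSup₂_le hnil)
  exact fun x hx => hle hx

/-- Char `p > 2`, `L` solvable: if `φ(L)` is invariant under all derivations,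
then so is `N(L)`. -/
theorem stmt9 {F L : Type*} [Field F] [LieRing L] [LieAlgebra F L]
    [FiniteDimensional F L] [LieAlgebra.IsSolvable L] (p : ℕ) [CharP F p] (hp : 2 < p)
    (hphi : ∀ (D : LieDerivation F L L), ∀ x ∈ lieFrattini F L, D x ∈ lieFrattini F L) :
    ∀ (D : LieDerivation F L L), ∀ x ∈ nilrad F L, D x ∈ nilrad F L :=
  stmt9_general p hp hphi
end

section
/- Let L be a finite-dimensional solvable Lie algebra that is minimal non-N(≤ k−1), i.e., n(L) = k but every proper subalgebra of L has nilpotent length ≤ k−1. Then L² = N_{k-1}(L) and L² has codimension one in L. -/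
variable (F : Type*) [Field F]

/-!
Every proper subspace `W ⊇ L²` is an ideal, hence a proper subalgebra, so `n(W) ≤ k - 1`. For an
ideal `W` of `L` one has `N_r(W) ⊆ N_r(L)`, by induction on `r`: an ideal `J` lies in `N_{r+1}`
iff some term of its lower central series lies in `N_r` (one direction needs the nilradical to be
nilpotent, i.e. Fitting's lemma), and the lower central series of `J ⊆ W` is the same in `W` and
in `L`. Hence `L² ⊆ W ⊆ N_{k-1}(L) ≠ L`. For `x ∉ N_{k-1}(L)` the subspace `L² + F x` cannot be
proper, so `L = L² ⊕ F x` and `L² = N_{k-1}(L)`.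
-/

section

variable {F}

section LinearAlgebra

variable {V : Type*} [AddCommGroup V] [Module F V]

theorem Submodule.eq_of_le_of_sup_span_singleton_eq_top {D N : Submodule F V} {x : V}
    (hDN : D ≤ N) (hx : x ∉ N) (h : D ⊔ F ∙ x = ⊤) : D = N := by
  have hdisj : N ⊓ F ∙ x = ⊥ :=
    disjoint_iff.mp (Submodule.disjoint_span_singleton.mpr fun hxN => absurd hxN hx)
  calc D = D ⊔ (F ∙ x) ⊓ N := by rw [inf_comm, hdisj, sup_bot_eq]
    _ = N := by rw [← sup_inf_assoc_of_le _ hDN, h, top_inf_eq]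

theorem Submodule.finrank_quotient_eq_one_of_sup_span_singleton_eq_top {D : Submodule F V}
    {x : V} (hx : x ∉ D) (h : D ⊔ F ∙ x = ⊤) : Module.finrank F (V ⧸ D) = 1 := by
  have hcompl : IsCompl D (F ∙ x) :=
    ⟨Submodule.disjoint_span_singleton.mpr fun hxD => absurd hxD hx, codisjoint_iff.mpr h⟩
  rw [(Submodule.quotientEquivOfIsCompl D _ hcompl).finrank_eq,
    finrank_span_singleton (by rintro rfl; exact hx D.zero_mem)]

end LinearAlgebra

variable {L : Type*} [LieRing L] [LieAlgebra F L]

theorem lieQuotMk_surjective (I : LieIdeal F L) : Function.Surjective (lieQuotMk I) :=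
  LieSubmodule.Quotient.surjective_mk' I

theorem lieQuotMk_eq_zero_iff (I : LieIdeal F L) {x : L} : lieQuotMk I x = 0 ↔ x ∈ I :=
  LieSubmodule.Quotient.mk_eq_zero I

theorem ker_lieQuotMk (I : LieIdeal F L) : (lieQuotMk I).ker = I :=
  LieSubmodule.ext _ _ fun _ => lieQuotMk_eq_zero_iff I

theorem map_lieQuotMk_comap (I : LieIdeal F L) (J : LieIdeal F (L ⧸ I)) :
    LieIdeal.map (lieQuotMk I) (LieIdeal.comap (lieQuotMk I) J) = J := by
  rw [LieIdeal.map_comap_eq ((lieQuotMk I).isIdealMorphism_of_surjective (lieQuotMk_surjective I)),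
    (lieQuotMk I).idealRange_eq_top_of_surjective (lieQuotMk_surjective I), top_inf_eq]

instance LieIdeal.quotient_isSolvable [LieAlgebra.IsSolvable L] (I : LieIdeal F L) :
    LieAlgebra.IsSolvable (L ⧸ I) :=
  (lieQuotMk_surjective I).lieAlgebra_isSolvable

/-- Unlike `LieIdeal.lcs`, this starts at `I`: it is the image in `L` of the lower central series
of `↥I`. -/
def lcsOfIdeal (I : LieIdeal F L) : ℕ → LieIdeal F L
  | 0 => I
  | k + 1 => ⁅I, lcsOfIdeal I k⁆

theorem lcsOfIdeal_succ (I : LieIdeal F L) (k : ℕ) :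
    lcsOfIdeal I (k + 1) = ⁅I, lcsOfIdeal I k⁆ := rfl

theorem lcsOfIdeal_le_self (I : LieIdeal F L) : ∀ k, lcsOfIdeal I k ≤ I
  | 0 => le_rfl
  | _ + 1 => LieSubmodule.lie_le_left _ _

theorem lcsOfIdeal_mono {I J : LieIdeal F L} (h : I ≤ J) : ∀ k, lcsOfIdeal I k ≤ lcsOfIdeal J k
  | 0 => h
  | k + 1 => LieSubmodule.mono_lie h (lcsOfIdeal_mono h k)

theorem map_lcsOfIdeal {L' : Type*} [LieRing L'] [LieAlgebra F L'] {f : L →ₗ⁅F⁆ L'}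
    (hf : Function.Surjective f) (I : LieIdeal F L) :
    ∀ k, LieIdeal.map f (lcsOfIdeal I k) = lcsOfIdeal (LieIdeal.map f I) k
  | 0 => rfl
  | k + 1 => by rw [lcsOfIdeal_succ, LieIdeal.map_bracket_eq f hf, map_lcsOfIdeal hf I k]; rfl

theorem comap_incl_lcsOfIdeal {I J : LieIdeal F L} (hJI : J ≤ I) :
    ∀ k, LieIdeal.comap I.incl (lcsOfIdeal J k) = lcsOfIdeal (LieIdeal.comap I.incl J) k
  | 0 => rfl
  | k + 1 => by
    rw [lcsOfIdeal_succ, lcsOfIdeal_succ, ← comap_incl_lcsOfIdeal hJI k,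
      LieIdeal.comap_bracket_incl_of_le I hJI ((lcsOfIdeal_le_self J k).trans hJI)]

theorem lcsOfIdeal_top (k : ℕ) :
    lcsOfIdeal (⊤ : LieIdeal F L) k = LieModule.lowerCentralSeries F L L k := by
  induction k with
  | zero => rfl
  | succ k ih => rw [lcsOfIdeal_succ, ih, LieModule.lowerCentralSeries_succ]

theorem isNilpotent_iff_exists_lcsOfIdeal_eq_bot (I : LieIdeal F L) :
    LieRing.IsNilpotent I ↔ ∃ k, lcsOfIdeal I k = ⊥ := by
  refine (LieModule.isNilpotent_iff F I I).trans (exists_congr fun k => ?_)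
  rw [← lcsOfIdeal_top, ← LieIdeal.comap_incl_self I, ← comap_incl_lcsOfIdeal le_rfl]
  constructor
  · intro h
    rw [← inf_eq_right.mpr (lcsOfIdeal_le_self I k), ← LieIdeal.map_comap_incl, h]
    exact LieIdeal.map_eq_bot_iff.mpr bot_le
  · intro h
    rw [h]
    exact I.ker_incl

theorem lie_le_lcsOfIdeal_succ_sup {I K X : LieIdeal F L} {m : ℕ}
    (h : X ≤ lcsOfIdeal I m ⊔ K) : ⁅I, X⁆ ≤ lcsOfIdeal I (m + 1) ⊔ K :=
  calc ⁅I, X⁆ ≤ ⁅I, lcsOfIdeal I m⁆ ⊔ ⁅I, K⁆ := by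
        rw [← LieSubmodule.lie_sup]; exact LieSubmodule.mono_lie le_rfl h
    _ ≤ lcsOfIdeal I (m + 1) ⊔ K := sup_le_sup le_rfl (LieSubmodule.lie_le_right _ _)

/-- A bracket of `m + n + 1` elements of `I ∪ J` contains `m + 1` elements of `I` or `n + 1`
of `J`. -/
theorem lcsOfIdeal_sup_le (I J : LieIdeal F L) (m n : ℕ) :
    lcsOfIdeal (I ⊔ J) (m + n) ≤ lcsOfIdeal I m ⊔ lcsOfIdeal J n := by
  induction hs : m + n generalizing m n with
  | zero =>
    obtain ⟨rfl, rfl⟩ : m = 0 ∧ n = 0 := by omega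
    exact le_rfl
  | succ s ih =>
    rw [lcsOfIdeal_succ, LieSubmodule.sup_lie]
    refine sup_le ?_ ?_
    · rcases m with _ | m
      · exact le_sup_of_le_left (LieSubmodule.lie_le_left _ _)
      · exact lie_le_lcsOfIdeal_succ_sup (ih m n (by omega))
    · rcases n with _ | n
      · exact le_sup_of_le_right (LieSubmodule.lie_le_left _ _)
      · have h := ih m n (by omega)
        rw [sup_comm (lcsOfIdeal I m)] at h ⊢
        exact lie_le_lcsOfIdeal_succ_sup h

theorem LieIdeal.isNilpotent_sup {I J : LieIdeal F L} (hI : LieRing.IsNilpotent I)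
    (hJ : LieRing.IsNilpotent J) : LieRing.IsNilpotent ↥(I ⊔ J) := by
  obtain ⟨m, hm⟩ := (isNilpotent_iff_exists_lcsOfIdeal_eq_bot I).mp hI
  obtain ⟨n, hn⟩ := (isNilpotent_iff_exists_lcsOfIdeal_eq_bot J).mp hJ
  refine (isNilpotent_iff_exists_lcsOfIdeal_eq_bot _).mpr ⟨m + n, le_bot_iff.mp ?_⟩
  calc lcsOfIdeal (I ⊔ J) (m + n) ≤ lcsOfIdeal I m ⊔ lcsOfIdeal J n := lcsOfIdeal_sup_le I J m n
    _ = ⊥ := by rw [hm, hn, sup_bot_eq]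

theorem le_nilrad {I : LieIdeal F L} (h : LieRing.IsNilpotent I) : I ≤ nilrad F L :=
  le_sSup h

theorem isNilpotent_nilrad [FiniteDimensional F L] : LieRing.IsNilpotent (nilrad F L) :=
  CompleteLattice.WellFoundedGT.isSupClosedCompact (LieIdeal F L) inferInstance
    {I | LieRing.IsNilpotent I} ⟨⊥, (inferInstance : LieRing.IsNilpotent (⊥ : LieIdeal F L))⟩
    fun _ hI _ hJ => LieIdeal.isNilpotent_sup hI hJ

theorem subsingleton_of_nilrad_eq_bot [LieAlgebra.IsSolvable L] (h : nilrad F L = ⊥) :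
    Subsingleton L := by
  have := LieAlgebra.abelian_derivedAbelianOfIdeal (⊤ : LieIdeal F L)
  have hab : LieAlgebra.derivedAbelianOfIdeal (⊤ : LieIdeal F L) ≤ nilrad F L :=
    le_nilrad inferInstance
  rw [h, le_bot_iff, LieAlgebra.abelian_of_solvable_ideal_eq_bot_iff] at hab
  exact (LieSubmodule.subsingleton_iff F L L).mp (subsingleton_of_bot_eq_top hab.symm)

theorem upperNil_succ (n : ℕ) : upperNil F L (n + 1) =
    LieIdeal.comap (lieQuotMk (upperNil F L n)) (nilrad F (L ⧸ upperNil F L n)) := rfl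

theorem upperNil_monotone : Monotone (upperNil F L) :=
  monotone_nat_of_le_succ fun n x hx => by
    rw [upperNil_succ, LieIdeal.mem_comap, (lieQuotMk_eq_zero_iff _).mpr hx]
    exact zero_mem _

theorem upperNil_eq_top_of_succ_eq [LieAlgebra.IsSolvable L] {n : ℕ}
    (h : upperNil F L (n + 1) = upperNil F L n) : upperNil F L n = ⊤ := by
  have hnil : nilrad F (L ⧸ upperNil F L n) = ⊥ := by
    rw [← map_lieQuotMk_comap _ (nilrad F _), ← upperNil_succ, h, LieIdeal.map_eq_bot_iff,
      ker_lieQuotMk]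
  have := subsingleton_of_nilrad_eq_bot hnil
  exact LieSubmodule.toSubmodule_injective (Submodule.Quotient.subsingleton_iff.mp this)

theorem exists_upperNil_eq_top [FiniteDimensional F L] [LieAlgebra.IsSolvable L] :
    ∃ n, upperNil F L n = ⊤ := by
  obtain ⟨n, hn⟩ := WellFoundedGT.monotone_chain_condition ⟨upperNil F L, upperNil_monotone⟩
  exact ⟨n, upperNil_eq_top_of_succ_eq (hn (n + 1) n.le_succ).symm⟩

theorem upperNil_eq_top_iff [FiniteDimensional F L] [LieAlgebra.IsSolvable L] {n : ℕ} :
    upperNil F L n = ⊤ ↔ nilLen F L ≤ n := by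
  refine ⟨fun h => Nat.sInf_le h, fun h => top_le_iff.mp ?_⟩
  exact (Nat.sInf_mem exists_upperNil_eq_top : upperNil F L (nilLen F L) = ⊤) ▸
    upperNil_monotone h

theorem nontrivial_of_nilLen_ne_zero (h : nilLen F L ≠ 0) : Nontrivial L := by
  rw [← not_subsingleton_iff_nontrivial]
  intro hL
  have := (LieSubmodule.subsingleton_iff F L L).mpr hL
  exact h (Nat.sInf_eq_zero.mpr (Or.inl (Subsingleton.elim _ _)))

theorem lcsOfIdeal_le_upperNil_iff {J : LieIdeal F L} {n c : ℕ} :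
    lcsOfIdeal J c ≤ upperNil F L n ↔
      lcsOfIdeal (LieIdeal.map (lieQuotMk (upperNil F L n)) J) c = ⊥ := by
  rw [← map_lcsOfIdeal (lieQuotMk_surjective _), LieIdeal.map_eq_bot_iff, ker_lieQuotMk]

theorem le_upperNil_succ_iff [FiniteDimensional F L] {J : LieIdeal F L} {n : ℕ} :
    J ≤ upperNil F L (n + 1) ↔ ∃ c, lcsOfIdeal J c ≤ upperNil F L n := by
  simp_rw [lcsOfIdeal_le_upperNil_iff, upperNil_succ, ← LieIdeal.map_le_iff_le_comap]
  constructor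
  · intro hJ
    obtain ⟨c, hc⟩ := (isNilpotent_iff_exists_lcsOfIdeal_eq_bot _).mp
      (isNilpotent_nilrad (F := F) (L := L ⧸ upperNil F L n))
    exact ⟨c, le_bot_iff.mp (hc ▸ lcsOfIdeal_mono hJ c)⟩
  · rintro ⟨c, hc⟩
    exact le_nilrad ((isNilpotent_iff_exists_lcsOfIdeal_eq_bot _).mpr ⟨c, hc⟩)

theorem le_upperNil_of_comap_incl_le [FiniteDimensional F L] {I J : LieIdeal F L} (hJI : J ≤ I)
    {n : ℕ} (h : LieIdeal.comap I.incl J ≤ upperNil F I n) : J ≤ upperNil F L n := by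
  induction n generalizing J with
  | zero =>
    rw [← inf_eq_right.mpr hJI, ← LieIdeal.map_comap_incl, le_bot_iff.mp h]
    exact (LieIdeal.map_eq_bot_iff.mpr bot_le).le
  | succ n ih =>
    obtain ⟨c, hc⟩ := le_upperNil_succ_iff.mp h
    rw [← comap_incl_lcsOfIdeal hJI] at hc
    exact le_upperNil_succ_iff.mpr ⟨c, ih ((lcsOfIdeal_le_self J c).trans hJI) hc⟩

theorem le_upperNil_of_nilLen_le [FiniteDimensional F L] [LieAlgebra.IsSolvable L]
    {I : LieIdeal F L} {n : ℕ} (h : nilLen F I ≤ n) : I ≤ upperNil F L n :=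
  le_upperNil_of_comap_incl_le le_rfl (by rw [upperNil_eq_top_iff.mpr h]; exact le_top)

theorem LieIdeal.exists_toSubmodule_eq_of_derivedSeries_le {W : Submodule F L}
    (h : (LieAlgebra.derivedSeries F L 1).toSubmodule ≤ W) :
    ∃ I : LieIdeal F L, I.toSubmodule = W :=
  ⟨{ W with lie_mem := fun _ => h (LieSubmodule.lie_mem_lie (LieSubmodule.mem_top _)
      (LieSubmodule.mem_top _)) }, rfl⟩

end

/-- If `L` is minimal non-`𝒩(≤ k-1)`, then `L² = N (k-1) (L)` has codimension one. -/
theorem stmt17 {F L : Type*} [Field F] [LieRing L] [LieAlgebra F L]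
    [FiniteDimensional F L] [LieAlgebra.IsSolvable L]
    (k : ℕ) (hk : 1 ≤ k) (hL : nilLen F L = k)
    (hmin : ∀ M : LieSubalgebra F L, M ≠ ⊤ → nilLen F M ≤ k - 1) :
    LieAlgebra.derivedSeries F L 1 = upperNil F L (k - 1) ∧
      Module.finrank F (L ⧸ LieAlgebra.derivedSeries F L 1) = 1 := by
  have : Nontrivial L := nontrivial_of_nilLen_ne_zero (F := F) (by omega)
  set D := LieAlgebra.derivedSeries F L 1
  set N := upperNil F L (k - 1)
  have hproper : ∀ W : Submodule F L, D.toSubmodule ≤ W → W ≠ ⊤ → W ≤ N.toSubmodule := by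
    intro W hDW hW
    obtain ⟨I, rfl⟩ := LieIdeal.exists_toSubmodule_eq_of_derivedSeries_le hDW
    refine le_upperNil_of_nilLen_le (hmin I.toLieSubalgebra fun hI => hW ?_)
    exact congrArg LieSubalgebra.toSubmodule hI
  have hDN : D.toSubmodule ≤ N.toSubmodule := hproper _ le_rfl fun hD =>
    (LieAlgebra.derivedSeries_lt_top_of_solvable F L).ne (LieSubmodule.toSubmodule_injective hD)
  obtain ⟨x, hx⟩ : ∃ x, x ∉ N := by
    by_contra! h
    exact (upperNil_eq_top_iff.not.mpr (by rw [hL]; omega)) (eq_top_iff.mpr fun x _ => h x)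
  have hsup : D.toSubmodule ⊔ F ∙ x = ⊤ := by
    by_contra h
    exact hx (hproper _ le_sup_left h
      (Submodule.mem_sup_right (Submodule.mem_span_singleton_self x)))
  exact ⟨LieSubmodule.toSubmodule_injective
      (Submodule.eq_of_le_of_sup_span_singleton_eq_top hDN hx hsup),
    Submodule.finrank_quotient_eq_one_of_sup_span_singleton_eq_top (fun hxD => hx (hDN hxD)) hsup⟩
end
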